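/- Let γ be a 2×2 real symmetric positive definite matrix with determinant 1. Writing its complex components as γ_{z̄z̄} = (γ₁₁ - γ₂₂ + 2iγ₁₂)/4 and γ_{zz̄} = (γ₁₁ + γ₂₂)/4, the Beltrami coefficient μ = γ_{z̄z̄}/(1/2 + γ_{zz̄}) satisfies |μ| < 1. -/

import Mathlib

/-!
For a real symmetric `2 × 2` matrix `T` one has `det T = 4 T_{zz̄}² - 4 |T_{z̄z̄}|²` and
`tr T = 4 T_{zz̄}`, hence `(1/2 + T_{zz̄})² - |T_{z̄z̄}|² = (1 + tr T + det T) / 4 = det (1 + T) / 4`.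
So `|T_{z̄z̄}| < |1/2 + T_{zz̄}|` exactly when `det (1 + T) > 0`, which holds for positive definite `T`
because `1 + T` is then positive definite too.
-/

namespace Complex

theorem norm_div_lt_one_of_normSq_lt {z w : ℂ} (h : normSq z < normSq w) : ‖z / w‖ < 1 := by
  have hw : w ≠ 0 := normSq_pos.1 ((normSq_nonneg z).trans_lt h)
  rw [norm_div, div_lt_one (norm_pos_iff.2 hw)]
  rw [normSq_eq_norm_sq, normSq_eq_norm_sq] at h
  exact (pow_lt_pow_iff_left₀ (norm_nonneg z) (norm_nonneg w) two_ne_zero).1 h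

end Complex

namespace Matrix

open Complex

noncomputable def zbarzbarComponent (T : Matrix (Fin 2) (Fin 2) ℝ) : ℂ :=
  (((T 0 0 - T 1 1 : ℝ) : ℂ) + 2 * (T 0 1 : ℝ) * I) / 4

noncomputable def zzbarComponent (T : Matrix (Fin 2) (Fin 2) ℝ) : ℂ :=
  ((T 0 0 + T 1 1 : ℝ) : ℂ) / 4

noncomputable def beltramiCoeff (T : Matrix (Fin 2) (Fin 2) ℝ) : ℂ :=
  T.zbarzbarComponent / (1 / 2 + T.zzbarComponent)

variable {T : Matrix (Fin 2) (Fin 2) ℝ}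

theorem normSq_zbarzbarComponent_add_det_one_add (hT : T.IsSymm) :
    normSq T.zbarzbarComponent + (1 + T).det / 4 = normSq (1 / 2 + T.zzbarComponent) := by
  have hT10 : T 1 0 = T 0 1 := hT.apply 0 1
  simp [zbarzbarComponent, zzbarComponent, normSq_apply, det_fin_two, hT10]
  ring

theorem norm_beltramiCoeff_lt_one (hT : T.IsSymm) (hdet : 0 < (1 + T).det) :
    ‖T.beltramiCoeff‖ < 1 :=
  norm_div_lt_one_of_normSq_lt <| by
    linarith [normSq_zbarzbarComponent_add_det_one_add hT]

theorem PosDef.norm_beltramiCoeff_lt_one (hT : T.PosDef) : ‖T.beltramiCoeff‖ < 1 :=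
  Matrix.norm_beltramiCoeff_lt_one (isHermitian_iff_isSymm.1 hT.isHermitian)
    (PosDef.one.add hT).det_pos

end Matrix

theorem stmt0_general (γ : Matrix (Fin 2) (Fin 2) ℝ)
    (hpos : γ.PosDef) :
    ‖(((γ 0 0 - γ 1 1 : ℝ) : ℂ) + 2 * (γ 0 1 : ℝ) * Complex.I) / 4 /
      (1 / 2 + ((γ 0 0 + γ 1 1 : ℝ) : ℂ) / 4)‖ < 1 :=
  hpos.norm_beltramiCoeff_lt_one

/-- For a 2×2 real symmetric positive definite matrix γ with det γ = 1,
the Beltrami coefficient μ = γ_{z̄z̄}/(1/2 + γ_{zz̄}) satisfies |μ| < 1, where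
γ_{z̄z̄} = (γ₁₁ - γ₂₂ + 2iγ₁₂)/4 and γ_{zz̄} = (γ₁₁ + γ₂₂)/4. -/
theorem stmt0 (γ : Matrix (Fin 2) (Fin 2) ℝ) (hsym : γ.IsSymm)
    (hpos : γ.PosDef) (hdet : γ.det = 1) :
    ‖(((γ 0 0 - γ 1 1 : ℝ) : ℂ) + 2 * (γ 0 1 : ℝ) * Complex.I) / 4 /
      (1 / 2 + ((γ 0 0 + γ 1 1 : ℝ) : ℂ) / 4)‖ < 1 :=
  stmt0_general γ hpos
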